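/- arXiv:2301.01634 — 2 statements merged into one kernel-verified Lean document; each statement's English description precedes it below -/
import Mathlib

section
/- Let G be a group generated by a finite set S = {g_1, ..., g_n} and let π be a unitary representation of G on a complex Hilbert space H. Then the following are equivalent: (i) for every finite subset F ⊆ G and every ε > 0 there exists a unit vector ξ ∈ H with ‖π(g)ξ − ξ‖ < ε for all g ∈ F (i.e., the trivial representation 1_G is weakly contained in π); (ii) for every nonzero z = (z_0, ..., z_n) ∈ ℂ^{n+1} with z_0 + z_1 + ⋯ + z_n = 0, the operator z_0 I + z_1π(g_1) + ⋯ + z_nπ(g_n) is not invertible (i.e., H_0 ⊆ p(A_π)). -/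
/-!
If `∑ zᵢ = 0`, then `A_π(z) ξ = ∑ᵢ zᵢ₊₁ (π(gᵢ)ξ - ξ)`, so almost invariant unit vectors are
approximate kernel vectors of `A_π(z)`, which therefore is not invertible.

Conversely, for `z = (n, -1, …, -1)` one has `Re ⟪A_π(z) ξ, ξ⟫ = ½ ∑ᵢ ‖π(gᵢ)ξ - ξ‖²`. Every
`x ∈ G` is a word in the generators, so `‖π(x)ξ - ξ‖²` is bounded by a constant times this
sum. Hence, if `π` has no almost invariant vectors, the quadratic form is bounded below on the
unit sphere, i.e. `A_π(z)` is coercive and thus invertible.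
-/

open scoped InnerProductSpace

namespace ContinuousLinearMap

variable {𝕜 H : Type*} [RCLike 𝕜] [NormedAddCommGroup H] [InnerProductSpace 𝕜 H]

theorem not_isUnit_of_forall_exists_norm_apply_lt {E : Type*} [NormedAddCommGroup E]
    [NormedSpace 𝕜 E] (T : E →L[𝕜] E) (h : ∀ ε > 0, ∃ ξ : E, ‖ξ‖ = 1 ∧ ‖T ξ‖ < ε) :
    ¬ IsUnit T := by
  rintro ⟨u, rfl⟩
  set M := ‖(↑u⁻¹ : E →L[𝕜] E)‖
  obtain ⟨ξ, hξ, hsmall⟩ := h (1 / (M + 1)) (by positivity)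
  have hbound : ‖ξ‖ ≤ M * ‖(u : E →L[𝕜] E) ξ‖ := by
    calc ‖ξ‖ = ‖(↑u⁻¹ : E →L[𝕜] E) ((u : E →L[𝕜] E) ξ)‖ := by
          rw [← mul_apply_eq_comp, u.inv_mul]; rfl
      _ ≤ M * ‖(u : E →L[𝕜] E) ξ‖ := le_opNorm _ _
  have hM : 0 ≤ M := norm_nonneg _
  rw [lt_div_iff₀ (by positivity)] at hsmall
  nlinarith

theorem isUnit_of_forall_norm_eq_one_le_norm_inner_map [CompleteSpace H] (T : H →L[𝕜] H)
    {c : ℝ} (hc : 0 < c) (h : ∀ ξ : H, ‖ξ‖ = 1 → c ≤ ‖⟪T ξ, ξ⟫_𝕜‖) : IsUnit T := by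
  refine T.isUnit_of_forall_le_norm_inner_map (c := ⟨c, hc.le⟩) hc fun ξ => ?_
  rcases eq_or_ne ξ 0 with rfl | hξ
  · simp
  have hunit := h _ (norm_smul_inv_norm (𝕜 := 𝕜) hξ)
  rw [map_smul, inner_smul_left, inner_smul_right, norm_mul, norm_mul, RCLike.norm_conj,
    norm_inv, RCLike.norm_ofReal, abs_norm, ← mul_assoc, ← sq, inv_pow, ← div_eq_inv_mul,
    le_div_iff₀ (by positivity)] at hunit
  exact (mul_comm _ _).trans_le hunit

end ContinuousLinearMap

section UnitaryRepresentation

variable {G H : Type*} [Group G] [NormedAddCommGroup H] [InnerProductSpace ℂ H]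

def AlmostHasInvariantVectors (π : G →* (H →L[ℂ] H)) : Prop :=
  ∀ (F : Finset G) (ε : ℝ), 0 < ε → ∃ ξ : H, ‖ξ‖ = 1 ∧ ∀ x ∈ F, ‖π x ξ - ξ‖ < ε

def pencil {n : ℕ} (π : G →* (H →L[ℂ] H)) (g : Fin n → G) (z : Fin (n + 1) → ℂ) :
    H →L[ℂ] H :=
  z 0 • 1 + ∑ i, z i.succ • π (g i)

variable (π : G →* (H →L[ℂ] H)) {n : ℕ} (g : Fin n → G)

theorem pencil_apply_of_sum_eq_zero {z : Fin (n + 1) → ℂ} (hz : ∑ i, z i = 0) (ξ : H) :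
    pencil π g z ξ = ∑ i, z i.succ • (π (g i) ξ - ξ) := by
  rw [Fin.sum_univ_succ, add_eq_zero_iff_eq_neg] at hz
  simp only [pencil, hz, neg_smul, neg_apply, add_apply, smul_apply, one_apply_eq_self,
    sum_apply, Finset.sum_smul, smul_sub, Finset.sum_sub_distrib]
  abel

theorem not_isUnit_pencil_of_almostHasInvariantVectors (h : AlmostHasInvariantVectors π)
    {z : Fin (n + 1) → ℂ} (hz : ∑ i, z i = 0) : ¬ IsUnit (pencil π g z) := by
  classical
  refine ContinuousLinearMap.not_isUnit_of_forall_exists_norm_apply_lt _ fun ε hε => ?_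
  set T := ∑ i : Fin n, ‖z i.succ‖
  obtain ⟨ξ, hξ, hinv⟩ := h (Finset.univ.image g) (ε / (T + 1)) (by positivity)
  refine ⟨ξ, hξ, ?_⟩
  calc ‖pencil π g z ξ‖ ≤ ∑ i : Fin n, ‖z i.succ‖ * ‖π (g i) ξ - ξ‖ := by
        rw [pencil_apply_of_sum_eq_zero π g hz]
        exact (norm_sum_le _ _).trans_eq (by simp only [norm_smul])
    _ ≤ ∑ i : Fin n, ‖z i.succ‖ * (ε / (T + 1)) := by
        gcongr with i
        exact (hinv _ (Finset.mem_image_of_mem g (Finset.mem_univ i))).le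
    _ = T / (T + 1) * ε := by rw [← Finset.sum_mul]; ring
    _ < ε := mul_lt_of_lt_one_left hε ((div_lt_one (by positivity)).2 (lt_add_one T))

variable [CompleteSpace H] {π} (hπ : ∀ x, π x ∈ unitary (H →L[ℂ] H))
include hπ

theorem norm_map_inv_sub_self (x : G) (ξ : H) : ‖π x⁻¹ ξ - ξ‖ = ‖π x ξ - ξ‖ := by
  have hx : π x (π x⁻¹ ξ) = ξ := by
    rw [← mul_apply_eq_comp, ← map_mul, mul_inv_cancel, map_one]; rfl
  rw [← ContinuousLinearMap.norm_map_of_mem_unitary (hπ x), map_sub, hx, norm_sub_rev]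

theorem norm_map_mul_sub_self_le (x y : G) (ξ : H) :
    ‖π (x * y) ξ - ξ‖ ≤ ‖π x ξ - ξ‖ + ‖π y ξ - ξ‖ := by
  have hxy : π (x * y) ξ - ξ = π x (π y ξ - ξ) + (π x ξ - ξ) := by
    rw [map_mul, mul_apply_eq_comp, map_sub]; abel
  rw [hxy, add_comm ‖π x ξ - ξ‖,
    ← ContinuousLinearMap.norm_map_of_mem_unitary (hπ x) (π y ξ - ξ)]
  exact norm_add_le _ _

theorem exists_sq_norm_map_sub_self_le (hgen : Subgroup.closure (Set.range g) = ⊤) (x : G) :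
    ∃ C : ℝ, ∀ ξ : H, ‖π x ξ - ξ‖ ^ 2 ≤ C * ∑ i, ‖π (g i) ξ - ξ‖ ^ 2 := by
  have hx : x ∈ Subgroup.closure (Set.range g) := hgen ▸ Subgroup.mem_top x
  induction hx using Subgroup.closure_induction with
  | mem _ hy =>
    obtain ⟨i, rfl⟩ := hy
    refine ⟨1, fun ξ => ?_⟩
    rw [one_mul]
    exact Finset.single_le_sum (f := fun j => ‖π (g j) ξ - ξ‖ ^ 2) (fun _ _ => by positivity)
      (Finset.mem_univ i)
  | one => exact ⟨0, fun ξ => by simp⟩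
  | mul y z _ _ hy hz =>
    obtain ⟨Cy, hCy⟩ := hy
    obtain ⟨Cz, hCz⟩ := hz
    refine ⟨2 * Cy + 2 * Cz, fun ξ => ?_⟩
    have hle := norm_map_mul_sub_self_le hπ y z ξ
    calc ‖π (y * z) ξ - ξ‖ ^ 2 ≤ (‖π y ξ - ξ‖ + ‖π z ξ - ξ‖) ^ 2 := by gcongr
      _ ≤ 2 * ‖π y ξ - ξ‖ ^ 2 + 2 * ‖π z ξ - ξ‖ ^ 2 := by
          nlinarith [sq_nonneg (‖π y ξ - ξ‖ - ‖π z ξ - ξ‖)]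
      _ ≤ _ := by linarith [hCy ξ, hCz ξ]
  | inv y _ hy =>
    obtain ⟨C, hC⟩ := hy
    exact ⟨C, fun ξ => norm_map_inv_sub_self hπ y ξ ▸ hC ξ⟩

theorem exists_le_sum_sq_of_not_almostHasInvariantVectors
    (hgen : Subgroup.closure (Set.range g) = ⊤) (h : ¬ AlmostHasInvariantVectors π) :
    ∃ δ > 0, ∀ ξ : H, ‖ξ‖ = 1 → δ ≤ ∑ i, ‖π (g i) ξ - ξ‖ ^ 2 := by
  simp only [AlmostHasInvariantVectors, not_forall, not_exists, not_and, not_lt] at h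
  obtain ⟨F, ε, hε, hF⟩ := h
  choose C hC using exists_sq_norm_map_sub_self_le g hπ hgen
  set K := ∑ x ∈ F, |C x| + 1
  refine ⟨ε ^ 2 / K, by positivity, fun ξ hξ => ?_⟩
  obtain ⟨x, hx, hεx⟩ := hF ξ hξ
  have hCx : C x ≤ K := (le_abs_self _).trans <|
    (Finset.single_le_sum (fun y _ => abs_nonneg (C y)) hx).trans (by linarith)
  rw [div_le_iff₀ (by positivity), mul_comm]
  calc ε ^ 2 ≤ ‖π x ξ - ξ‖ ^ 2 := by gcongr
    _ ≤ C x * ∑ i, ‖π (g i) ξ - ξ‖ ^ 2 := hC x ξ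
    _ ≤ K * ∑ i, ‖π (g i) ξ - ξ‖ ^ 2 := by gcongr

theorem re_inner_sub_map_self (x : G) (ξ : H) :
    (⟪ξ - π x ξ, ξ⟫_ℂ).re = ‖π x ξ - ξ‖ ^ 2 / 2 := by
  have := norm_sub_sq (𝕜 := ℂ) (π x ξ) ξ
  rw [ContinuousLinearMap.norm_map_of_mem_unitary (hπ x)] at this
  rw [inner_sub_left, Complex.sub_re, ← RCLike.re_to_complex, ← RCLike.re_to_complex,
    inner_self_eq_norm_sq, this]
  ring

theorem re_inner_pencil_cons_neg_one (ξ : H) :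
    (⟪pencil π g (Fin.cons (n : ℂ) fun _ => -1) ξ, ξ⟫_ℂ).re =
      (∑ i, ‖π (g i) ξ - ξ‖ ^ 2) / 2 := by
  rw [pencil_apply_of_sum_eq_zero π g (by simp [Fin.sum_univ_succ]), sum_inner, Complex.re_sum,
    Finset.sum_div]
  refine Finset.sum_congr rfl fun i _ => ?_
  rw [Fin.cons_succ, neg_one_smul, neg_sub, re_inner_sub_map_self hπ]

end UnitaryRepresentation

/-- For a unitary representation `π` of a finitely generated group `G = ⟨g₁, ..., gₙ⟩`, the
trivial representation is weakly contained in `π` (i.e. `π` almost has invariant vectors) iff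
the hyperplane `H₀ = {z : z₀ + ⋯ + zₙ = 0}` is contained in the projective spectrum
`p(A_π)`. -/
theorem stmt8 {G : Type*} [Group G] (n : ℕ) (hn : 0 < n) (g : Fin n → G)
    (hgen : Subgroup.closure (Set.range g) = ⊤)
    {H : Type*} [NormedAddCommGroup H] [InnerProductSpace ℂ H] [CompleteSpace H]
    (π : G →* (H →L[ℂ] H)) (hπ : ∀ x, π x ∈ unitary (H →L[ℂ] H)) :
    (∀ (F : Finset G) (ε : ℝ), 0 < ε → ∃ ξ : H, ‖ξ‖ = 1 ∧ ∀ x ∈ F, ‖π x ξ - ξ‖ < ε) ↔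
      (∀ z : Fin (n + 1) → ℂ, z ≠ 0 → ∑ i, z i = 0 →
        ¬ IsUnit (z 0 • (1 : H →L[ℂ] H) + ∑ i : Fin n, z i.succ • π (g i))) := by
  refine ⟨fun h z _ hz => not_isUnit_pencil_of_almostHasInvariantVectors π g h hz,
    fun hspec => by_contra fun h => ?_⟩
  obtain ⟨δ, hδ, hgap⟩ := exists_le_sum_sq_of_not_almostHasInvariantVectors g hπ hgen h
  set z : Fin (n + 1) → ℂ := Fin.cons (n : ℂ) fun _ => -1
  have hz : z ≠ 0 := fun h0 => by simpa [z, hn.ne'] using congrFun h0 0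
  refine hspec z hz (by simp [z, Fin.sum_univ_succ]) <|
    ContinuousLinearMap.isUnit_of_forall_norm_eq_one_le_norm_inner_map (pencil π g z)
      (half_pos hδ) fun ξ hξ => ?_
  calc δ / 2 ≤ (∑ i, ‖π (g i) ξ - ξ‖ ^ 2) / 2 := by linarith [hgap ξ hξ]
    _ = (⟪pencil π g z ξ, ξ⟫_ℂ).re := (re_inner_pencil_cons_neg_one g hπ ξ).symm
    _ ≤ ‖⟪pencil π g z ξ, ξ⟫_ℂ‖ := Complex.re_le_norm _
end

section
/- Let G be a group generated by a finite set {g_1, ..., g_n}, let λ be its left regular representation on ℓ²(G), and let M_λ = (1/n)(λ(g_1) + ⋯ + λ(g_n)) be the associated Markov operator. Then G is amenable if and only if 1 belongs to the spectrum of M_λ, i.e., if and only if I − M_λ is not invertible on ℓ²(G). -/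
open scoped ENNReal

/-- The space `ℓ∞(G)` of bounded complex functions on `G`, as a submodule of `G → ℂ`. -/
noncomputable def boundedFuns (G : Type*) : Submodule ℂ (G → ℂ) where
  carrier := {f | ∃ C : ℝ, ∀ x, ‖f x‖ ≤ C}
  add_mem' := by
    rintro f g ⟨C, hC⟩ ⟨D, hD⟩
    exact ⟨C + D, fun x => (norm_add_le _ _).trans (add_le_add (hC x) (hD x))⟩
  zero_mem' := ⟨0, fun x => by simp⟩
  smul_mem' := by
    rintro c f ⟨C, hC⟩
    exact ⟨‖c‖ * C, fun x => by
      simpa [norm_smul] using mul_le_mul_of_nonneg_left (hC x) (norm_nonneg c)⟩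

/-- A group `G` is amenable if there is a left-invariant mean on `ℓ∞(G)`: a linear functional
`m` with `m(1) = 1`, `m(f) ≥ 0` for `f` taking values in `[0, ∞)`, and
`m(g·f) = m(f)` where `(g·f)(x) = f(g⁻¹x)`. -/
def IsAmenable (G : Type*) [Group G] : Prop :=
  ∃ m : boundedFuns G →ₗ[ℂ] ℂ,
    m ⟨fun _ => 1, 1, fun _ => by simp⟩ = 1 ∧
    (∀ f : boundedFuns G, (∀ x, ∃ r : ℝ, 0 ≤ r ∧ (f : G → ℂ) x = r) →
      ∃ r : ℝ, 0 ≤ r ∧ m f = r) ∧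
    (∀ (g : G) (f : boundedFuns G),
      m ⟨fun x => (f : G → ℂ) (g⁻¹ * x), by
        obtain ⟨C, hC⟩ := f.2
        exact ⟨C, fun x => hC _⟩⟩ = m f)

/-!
Write `T = 1 - M_λ`. An operator with `c ‖x‖² ≤ ‖⟪T x, x⟫‖` is invertible, so if `T` is not,
there are unit vectors `ξₖ` with `⟪T ξₖ, ξₖ⟫ → 0`. Since the `λ(gᵢ)` are isometries,
`‖λ(gᵢ) ξₖ - ξₖ‖² ≤ 2n Re ⟪T ξₖ, ξₖ⟫ → 0`, and the `a` with `‖λ(a) ξₖ - ξₖ‖ → 0` form a subgroup,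
hence all of `G`. The probability densities `|ξₖ|²` are then almost invariant in `ℓ¹`; integrating
bounded functions against them and passing to an ultrafilter limit gives an invariant mean.

Conversely, if `G` is amenable, Day's argument (Hahn–Banach separation in `(ℓ¹)ⁿ`, tested against
the invariant mean) gives finitely supported probability densities `q` with `‖gᵢ · q - q‖₁`
arbitrarily small. As `(√a - √b)² ≤ |a - b|`, the unit vectors `√q` are almost invariant under
every `λ(gᵢ)`, so `T` is not bounded below.
-/

open scoped lp ComplexOrder NNReal InnerProductSpace
open Filter Topology RCLike

section lpFacts

variable {ι E : Type*} [NormedAddCommGroup E]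

theorem lp.hasSum_norm_sq (f : ℓ²(ι, E)) : HasSum (fun i => ‖f i‖ ^ 2) (‖f‖ ^ 2) := by
  simpa using lp.hasSum_norm (p := 2) (by norm_num) f

theorem memℓp_two_iff {f : ι → E} : Memℓp f 2 ↔ Summable fun i => ‖f i‖ ^ 2 := by
  simpa using memℓp_gen_iff (p := 2) (f := f) (by norm_num)

theorem lp.norm_eq_tsum_norm (f : ℓ¹(ι, E)) : ‖f‖ = ∑' i, ‖f i‖ := by
  simpa using lp.norm_eq_tsum_rpow (p := 1) (by norm_num) f

theorem abs_norm_sq_sub_norm_sq_le (a b : E) :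
    |‖a‖ ^ 2 - ‖b‖ ^ 2| ≤ (‖a‖ + ‖b‖) * ‖a - b‖ := by
  rw [sq_sub_sq, abs_mul, abs_of_nonneg (by positivity : 0 ≤ ‖a‖ + ‖b‖)]
  exact mul_le_mul_of_nonneg_left (abs_norm_sub_norm_le a b) (by positivity)

theorem lp.tsum_abs_norm_sq_sub_norm_sq_le (f g : ℓ²(ι, E)) :
    ∑' i, |‖f i‖ ^ 2 - ‖g i‖ ^ 2| ≤ (‖f‖ + ‖g‖) * ‖f - g‖ := by
  have hpq : (2 : ℝ≥0∞).toReal.HolderConjugate (2 : ℝ≥0∞).toReal := by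
    simpa using Real.HolderConjugate.two_two
  have hf := lp.tsum_mul_le_mul_norm hpq f (f - g)
  have hg := lp.tsum_mul_le_mul_norm hpq g (f - g)
  calc ∑' i, |‖f i‖ ^ 2 - ‖g i‖ ^ 2|
      ≤ ∑' i, (‖f i‖ * ‖(f - g) i‖ + ‖g i‖ * ‖(f - g) i‖) := by
        have hle : ∀ i, |‖f i‖ ^ 2 - ‖g i‖ ^ 2| ≤ ‖f i‖ * ‖(f - g) i‖ + ‖g i‖ * ‖(f - g) i‖ :=
          fun i => by simpa [add_mul] using abs_norm_sq_sub_norm_sq_le (f i) (g i)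
        exact (Summable.of_nonneg_of_le (fun i => abs_nonneg _) hle (hf.1.add hg.1)).tsum_le_tsum
          hle (hf.1.add hg.1)
    _ ≤ (‖f‖ + ‖g‖) * ‖f - g‖ := by
        rw [hf.1.tsum_add hg.1, add_mul]
        exact add_le_add hf.2 hg.2

end lpFacts

theorem Real.sq_sqrt_sub_sqrt_le_abs_sub {a b : ℝ} (ha : 0 ≤ a) (hb : 0 ≤ b) :
    (√a - √b) ^ 2 ≤ |a - b| := by
  rcases le_total a b with h | h
  · rw [abs_of_nonpos (by linarith)]
    nlinarith [Real.sq_sqrt ha, Real.sq_sqrt hb, Real.sqrt_nonneg a, Real.sqrt_le_sqrt h]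
  · rw [abs_of_nonneg (by linarith)]
    nlinarith [Real.sq_sqrt ha, Real.sq_sqrt hb, Real.sqrt_nonneg b, Real.sqrt_le_sqrt h]

section Numerical

variable {𝕜 E : Type*} [RCLike 𝕜] [NormedAddCommGroup E] [InnerProductSpace 𝕜 E] [CompleteSpace E]

theorem ContinuousLinearMap.exists_norm_eq_one_norm_inner_lt_of_not_isUnit {T : E →L[𝕜] E}
    (hT : ¬ IsUnit T) {ε : ℝ} (hε : 0 < ε) : ∃ x, ‖x‖ = 1 ∧ ‖⟪T x, x⟫_𝕜‖ < ε := by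
  by_contra! h
  refine hT (T.isUnit_of_forall_le_norm_inner_map (c := ⟨ε, hε.le⟩) hε fun x => ?_)
  rcases eq_or_ne x 0 with rfl | hx
  · simp
  have hu := h _ (norm_smul_inv_norm (𝕜 := 𝕜) hx)
  rw [map_smul, inner_smul_left, inner_smul_right, ← mul_assoc, norm_mul, norm_mul] at hu
  simp only [map_inv₀, conj_ofReal, norm_inv, norm_ofReal, abs_norm] at hu
  calc ‖x‖ ^ 2 * ε ≤ ‖x‖ ^ 2 * (‖x‖⁻¹ * ‖x‖⁻¹ * ‖⟪T x, x⟫_𝕜‖) := by gcongr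
    _ = ‖⟪T x, x⟫_𝕜‖ := by field_simp

theorem ContinuousLinearMap.exists_tendsto_inner_of_not_isUnit {T : E →L[𝕜] E}
    (hT : ¬ IsUnit T) :
    ∃ x : ℕ → E, (∀ k, ‖x k‖ = 1) ∧ Tendsto (fun k => ⟪T (x k), x k⟫_𝕜) atTop (𝓝 0) := by
  choose x hx1 hx using fun k : ℕ =>
    T.exists_norm_eq_one_norm_inner_lt_of_not_isUnit hT (Nat.one_div_pos_of_nat (n := k))
  exact ⟨x, hx1, squeeze_zero_norm (fun k => (hx k).le) tendsto_one_div_add_atTop_nhds_zero_nat⟩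

end Numerical

section Markov

variable {𝕜 E ι : Type*} [RCLike 𝕜] [Fintype ι]

section Normed

variable [NormedAddCommGroup E] [NormedSpace 𝕜 E]

noncomputable def markovOp (U : ι → E →L[𝕜] E) : E →L[𝕜] E :=
  (Fintype.card ι : 𝕜)⁻¹ • ∑ i, U i

theorem norm_one_sub_markovOp_apply_le [Nonempty ι] (U : ι → E →L[𝕜] E) {x : E} {r : ℝ}
    (h : ∀ i, ‖U i x - x‖ ≤ r) : ‖(1 - markovOp U) x‖ ≤ r := by
  have hcard : (Fintype.card ι : 𝕜) ≠ 0 := Nat.cast_ne_zero.mpr Fintype.card_ne_zero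
  have hx : (1 - markovOp U) x = (Fintype.card ι : 𝕜)⁻¹ • ∑ i, (x - U i x) := by
    simp only [markovOp, sub_apply, one_apply_eq_self, smul_apply, sum_apply,
      Finset.sum_sub_distrib, Finset.sum_const, Finset.card_univ, smul_sub,
      ← Nat.cast_smul_eq_nsmul 𝕜, smul_smul, inv_mul_cancel₀ hcard, one_smul]
  calc ‖(1 - markovOp U) x‖ ≤ (Fintype.card ι : ℝ)⁻¹ * ∑ i, ‖x - U i x‖ := by
        rw [hx, norm_smul, norm_inv, RCLike.norm_natCast]
        gcongr
        exact norm_sum_le _ _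
    _ ≤ (Fintype.card ι : ℝ)⁻¹ * ∑ _i : ι, r := by
        gcongr with i
        rw [norm_sub_rev]
        exact h i
    _ = r := by
        rw [Finset.sum_const, Finset.card_univ, nsmul_eq_mul]
        field_simp

end Normed

section Inner

variable [NormedAddCommGroup E] [InnerProductSpace 𝕜 E]

theorem norm_sub_sq_le_of_norm_le {U : E →L[𝕜] E} (hU : ∀ x, ‖U x‖ ≤ ‖x‖) (x : E) :
    ‖U x - x‖ ^ 2 ≤ 2 * (‖x‖ ^ 2 - re ⟪U x, x⟫_𝕜) := by
  rw [@norm_sub_sq 𝕜]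
  nlinarith [hU x, norm_nonneg (U x), norm_nonneg x]

theorem card_mul_re_inner_one_sub_markovOp_apply (U : ι → E →L[𝕜] E) (x : E) :
    Fintype.card ι * re ⟪(1 - markovOp U) x, x⟫_𝕜 = ∑ i, (‖x‖ ^ 2 - re ⟪U i x, x⟫_𝕜) := by
  rcases isEmpty_or_nonempty ι with hι | hι
  · simp
  have hcard : (Fintype.card ι : 𝕜) ≠ 0 := Nat.cast_ne_zero.mpr Fintype.card_ne_zero
  simp only [markovOp, sub_apply, one_apply_eq_self, smul_apply, sum_apply, inner_sub_left,
    inner_smul_left, sum_inner, Finset.sum_sub_distrib, Finset.sum_const,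
    Finset.card_univ, nsmul_eq_mul, inner_self_eq_norm_sq_to_K]
  have hre : ∀ z : 𝕜, re ((Fintype.card ι : 𝕜)⁻¹ * z) = (Fintype.card ι : ℝ)⁻¹ * re z := by
    intro z
    simpa using re_ofReal_mul (K := 𝕜) (Fintype.card ι : ℝ)⁻¹ z
  rw [map_inv₀, map_natCast, map_sub, ← ofReal_pow, ofReal_re, hre, map_sum]
  field_simp

variable {U : ι → E →L[𝕜] E}

theorem norm_sub_sq_le_card_mul_re_inner_one_sub_markovOp (hU : ∀ i x, ‖U i x‖ ≤ ‖x‖)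
    (i : ι) (x : E) :
    ‖U i x - x‖ ^ 2 ≤ 2 * (Fintype.card ι * re ⟪(1 - markovOp U) x, x⟫_𝕜) := by
  have hterm : ∀ j, 0 ≤ ‖x‖ ^ 2 - re ⟪U j x, x⟫_𝕜 := fun j => by
    nlinarith [re_inner_le_norm (𝕜 := 𝕜) (U j x) x, hU j x, norm_nonneg x]
  rw [card_mul_re_inner_one_sub_markovOp_apply]
  calc ‖U i x - x‖ ^ 2 ≤ 2 * (‖x‖ ^ 2 - re ⟪U i x, x⟫_𝕜) := norm_sub_sq_le_of_norm_le (hU i) x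
    _ ≤ 2 * ∑ j, (‖x‖ ^ 2 - re ⟪U j x, x⟫_𝕜) := by
        gcongr
        exact Finset.single_le_sum (fun j _ => hterm j) (Finset.mem_univ i)

theorem tendsto_norm_sub_of_tendsto_inner_one_sub_markovOp (hU : ∀ i x, ‖U i x‖ ≤ ‖x‖)
    {α : Type*} {l : Filter α} {x : α → E}
    (hx : Tendsto (fun k => ⟪(1 - markovOp U) (x k), x k⟫_𝕜) l (𝓝 0)) (i : ι) :
    Tendsto (fun k => ‖U i (x k) - x k‖) l (𝓝 0) := by
  have hre : Tendsto (fun k => 2 * (Fintype.card ι * re ⟪(1 - markovOp U) (x k), x k⟫_𝕜)) l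
      (𝓝 0) := by
    simpa using (((continuous_re.tendsto 0).comp hx).const_mul (Fintype.card ι : ℝ)).const_mul 2
  have hsq := squeeze_zero (fun k => sq_nonneg _)
    (fun k => norm_sub_sq_le_card_mul_re_inner_one_sub_markovOp hU i (x k)) hre
  simpa [Real.sqrt_sq (norm_nonneg _)] using hsq.sqrt

end Inner

end Markov

section AlmostInvariant

variable {G R E α : Type*} [Group G] [Semiring R] [SeminormedAddCommGroup E] [Module R E]

def almostInvariantSubgroup (ρ : G →* (E →ₗᵢ[R] E)) (l : Filter α) (x : α → E) :
    Subgroup G where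
  carrier := {a | Tendsto (fun k => ‖ρ a (x k) - x k‖) l (𝓝 0)}
  one_mem' := by simpa using tendsto_const_nhds
  mul_mem' {a b} ha hb := by
    refine squeeze_zero (fun _ => norm_nonneg _) (fun k => ?_) (by simpa using hb.add ha)
    calc ‖ρ (a * b) (x k) - x k‖ = ‖(ρ a (ρ b (x k)) - ρ a (x k)) + (ρ a (x k) - x k)‖ := by
          simp
      _ ≤ ‖ρ a (ρ b (x k)) - ρ a (x k)‖ + ‖ρ a (x k) - x k‖ := norm_add_le _ _
      _ = ‖ρ b (x k) - x k‖ + ‖ρ a (x k) - x k‖ := by rw [← map_sub, LinearIsometry.norm_map]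
  inv_mem' {a} ha := by
    have hinv : ∀ y, ρ a⁻¹ (ρ a y) = y := fun y => by
      rw [← Function.comp_apply (f := ρ a⁻¹), ← LinearIsometry.coe_mul, ← map_mul]
      simp
    refine ha.congr fun k => ?_
    rw [← (ρ a⁻¹).norm_map, map_sub, hinv, norm_sub_rev]

end AlmostInvariant

theorem exists_linearMap_tendsto_of_bounded {ι 𝕜 X F : Type*} [NormedField 𝕜] [AddCommGroup X]
    [Module 𝕜 X] [NormedAddCommGroup F] [NormedSpace 𝕜 F] [ProperSpace F] (U : Ultrafilter ι)
    (φ : ι → X →ₗ[𝕜] F) (hφ : ∀ x, ∃ C, ∀ k, ‖φ k x‖ ≤ C) :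
    ∃ m : X →ₗ[𝕜] F, ∀ x, Tendsto (fun k => φ k x) U (𝓝 (m x)) := by
  have hlim : ∀ x, ∃ y, Tendsto (fun k => φ k x) U (𝓝 y) := fun x => by
    obtain ⟨C, hC⟩ := hφ x
    obtain ⟨y, -, hy⟩ := (isCompact_closedBall (0 : F) C).ultrafilter_le_nhds'
      (U.map fun k => φ k x) (Ultrafilter.mem_map.mpr (univ_mem' fun k => by simpa using hC k))
    exact ⟨y, hy⟩
  choose m hm using hlim
  refine ⟨{ toFun := m, map_add' := fun x y => ?_, map_smul' := fun c x => ?_ }, hm⟩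
  · exact tendsto_nhds_unique (hm (x + y)) (by simpa using (hm x).add (hm y))
  · exact tendsto_nhds_unique (hm (c • x)) (by simpa using (hm x).const_smul c)

namespace boundedFuns

variable {G : Type*}

def one : boundedFuns G := ⟨fun _ => 1, 1, fun _ => by simp⟩

def leftTranslate [Group G] (g : G) (f : boundedFuns G) : boundedFuns G :=
  ⟨fun x => (f : G → ℂ) (g⁻¹ * x), by
    obtain ⟨C, hC⟩ := f.2
    exact ⟨C, fun x => hC _⟩⟩

theorem summable_ofReal_mul {w : G → ℝ} (hw : Summable w) {f : G → ℂ} {C : ℝ}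
    (hf : ∀ x, ‖f x‖ ≤ C) : Summable fun x => (w x : ℂ) * f x :=
  hw.abs.mul_right C |>.of_norm_bounded fun x => by
    rw [norm_mul, Complex.norm_real, Real.norm_eq_abs]
    exact mul_le_mul_of_nonneg_left (hf x) (abs_nonneg _)

theorem norm_tsum_ofReal_mul_le {w : G → ℝ} (hw : Summable w) {f : G → ℂ} {C : ℝ}
    (hf : ∀ x, ‖f x‖ ≤ C) : ‖∑' x, (w x : ℂ) * f x‖ ≤ (∑' x, |w x|) * C := by
  rw [← tsum_mul_right]
  refine tsum_of_norm_bounded (hw.abs.mul_right C).hasSum fun x => ?_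
  rw [norm_mul, Complex.norm_real, Real.norm_eq_abs]
  exact mul_le_mul_of_nonneg_left (hf x) (abs_nonneg _)

noncomputable def weightedSum (w : G → ℝ) (hw : Summable w) : boundedFuns G →ₗ[ℂ] ℂ where
  toFun f := ∑' x, (w x : ℂ) * (f : G → ℂ) x
  map_add' f g := by
    obtain ⟨C, hC⟩ := f.2
    obtain ⟨D, hD⟩ := g.2
    simpa only [Submodule.coe_add, Pi.add_apply, mul_add] using
      (summable_ofReal_mul hw hC).tsum_add (summable_ofReal_mul hw hD)
  map_smul' c f := by
    simp only [RingHom.id_apply, smul_eq_mul, ← tsum_mul_left]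
    exact tsum_congr fun x => by simp only [Submodule.coe_smul, Pi.smul_apply, smul_eq_mul]; ring


theorem norm_weightedSum_leftTranslate_sub_le [Group G] {w : G → ℝ} (hw : Summable w) (a : G)
    {f : boundedFuns G} {C : ℝ} (hf : ∀ x, ‖(f : G → ℂ) x‖ ≤ C) :
    ‖weightedSum w hw (leftTranslate a f) - weightedSum w hw f‖ ≤
      (∑' x, |w (a * x) - w x|) * C := by
  have hwa : Summable fun x => w (a * x) := (Equiv.mulLeft a).summable_iff.mpr hw
  have htr : weightedSum w hw (leftTranslate a f) = ∑' x, (w (a * x) : ℂ) * (f : G → ℂ) x := by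
    refine ((Equiv.mulLeft a).tsum_eq _).symm.trans (tsum_congr fun x => ?_)
    simp [leftTranslate]
  rw [htr]
  change ‖_ - ∑' x, (w x : ℂ) * (f : G → ℂ) x‖ ≤ _
  rw [← (summable_ofReal_mul hwa hf).tsum_sub (summable_ofReal_mul hw hf)]
  simpa only [Complex.ofReal_sub, sub_mul] using norm_tsum_ofReal_mul_le (hwa.sub hw) hf

end boundedFuns

open boundedFuns in
theorem isAmenable_of_tendsto_tsum_abs_sub {G ι : Type*} [Group G] {l : Filter ι} [l.NeBot]
    (w : ι → G → ℝ) (hw0 : ∀ k x, 0 ≤ w k x) (hw : ∀ k, Summable (w k))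
    (hw1 : ∀ k, ∑' x, w k x = 1)
    (hinv : ∀ a, Tendsto (fun k => ∑' x, |w k (a * x) - w k x|) l (𝓝 0)) : IsAmenable G := by
  set φ := fun k => weightedSum (w k) (hw k)
  have hbound : ∀ k (f : boundedFuns G) C, (∀ x, ‖(f : G → ℂ) x‖ ≤ C) → ‖φ k f‖ ≤ C :=
    fun k f C hC => by
    simpa [φ, weightedSum, abs_of_nonneg (hw0 k _), hw1 k] using norm_tsum_ofReal_mul_le (hw k) hC
  obtain ⟨m, hm⟩ := exists_linearMap_tendsto_of_bounded (Ultrafilter.of l) φ fun f => by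
    obtain ⟨C, hC⟩ := f.2
    exact ⟨C, fun k => hbound k f C hC⟩
  refine ⟨m, ?_, fun f hf => ?_, fun a f => ?_⟩
  · refine tendsto_nhds_unique (hm one) (tendsto_const_nhds.congr fun k => ?_)
    change 1 = ∑' x, (w k x : ℂ) * 1
    simp [← Complex.ofReal_tsum, hw1 k]
  · choose r hr0 hr using hf
    have hpos : ∀ k, 0 ≤ φ k f := fun k => by
      change 0 ≤ ∑' x, (w k x : ℂ) * (f : G → ℂ) x
      simp only [hr, ← Complex.ofReal_mul, ← Complex.ofReal_tsum]
      exact Complex.zero_le_real.mpr (tsum_nonneg fun x => mul_nonneg (hw0 k x) (hr0 x))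
    obtain ⟨t, ht, hmt⟩ := RCLike.nonneg_iff_exists_ofReal.mp
      (isClosed_Ici.mem_of_tendsto (hm f) (Eventually.of_forall hpos))
    exact ⟨t, ht, hmt.symm⟩
  · obtain ⟨C, hC⟩ := f.2
    have hdiff := squeeze_zero_norm (fun k => norm_weightedSum_leftTranslate_sub_le (hw k) a hC)
      (by simpa using (hinv a).mul_const C)
    exact sub_eq_zero.mp (tendsto_nhds_unique ((hm _).sub (hm f))
      (hdiff.mono_left (Ultrafilter.of_le l)))

section LeftRegular

variable {G : Type*} [Group G]

def IsLeftRegularRep (lam : G → (ℓ²(G, ℂ) →L[ℂ] ℓ²(G, ℂ))) : Prop :=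
  ∀ (x : G) (f : ℓ²(G, ℂ)) (y : G), lam x f y = f (x⁻¹ * y)

namespace IsLeftRegularRep

variable {lam : G → (ℓ²(G, ℂ) →L[ℂ] ℓ²(G, ℂ))}

theorem apply_apply (hlam : IsLeftRegularRep lam) (x : G) (f : ℓ²(G, ℂ)) (y : G) :
    lam x f y = f (x⁻¹ * y) :=
  hlam x f y

theorem norm_apply (hlam : IsLeftRegularRep lam) (a : G) (f : ℓ²(G, ℂ)) : ‖lam a f‖ = ‖f‖ := by
  have h : HasSum (fun y => ‖lam a f y‖ ^ 2) (‖f‖ ^ 2) := by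
    simpa only [hlam.apply_apply, Function.comp_def, Equiv.coe_mulLeft] using
      (Equiv.mulLeft a⁻¹).hasSum_iff.mpr (lp.hasSum_norm_sq f)
  exact (sq_eq_sq₀ (norm_nonneg _) (norm_nonneg _)).mp ((lp.hasSum_norm_sq _).unique h)

noncomputable def toMonoidHom (hlam : IsLeftRegularRep lam) :
    G →* (ℓ²(G, ℂ) →ₗᵢ[ℂ] ℓ²(G, ℂ)) where
  toFun a := { toLinearMap := lam a, norm_map' := hlam.norm_apply a }
  map_one' := LinearIsometry.ext fun f => lp.ext <| funext fun y => by simp [hlam.apply_apply]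
  map_mul' a b := LinearIsometry.ext fun f => lp.ext <| funext fun y => by
    simp [hlam.apply_apply, mul_assoc]

theorem isAmenable_of_tendsto (hlam : IsLeftRegularRep lam) {ι : Type*} {l : Filter ι} [l.NeBot]
    (ξ : ι → ℓ²(G, ℂ)) (hξ : ∀ k, ‖ξ k‖ = 1)
    (h : ∀ a, Tendsto (fun k => ‖lam a (ξ k) - ξ k‖) l (𝓝 0)) : IsAmenable G := by
  refine isAmenable_of_tendsto_tsum_abs_sub (l := l) (fun k x => ‖ξ k x‖ ^ 2)
    (fun _ _ => by positivity) (fun k => (lp.hasSum_norm_sq (ξ k)).summable)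
    (fun k => by rw [(lp.hasSum_norm_sq (ξ k)).tsum_eq, hξ k, one_pow]) fun a => ?_
  refine squeeze_zero (fun k => tsum_nonneg fun _ => abs_nonneg _) (fun k => ?_)
    (by simpa using (h a⁻¹).const_mul 2)
  calc ∑' x, |‖ξ k (a * x)‖ ^ 2 - ‖ξ k x‖ ^ 2|
      = ∑' x, |‖lam a⁻¹ (ξ k) x‖ ^ 2 - ‖ξ k x‖ ^ 2| := by simp [hlam.apply_apply]
    _ ≤ (‖lam a⁻¹ (ξ k)‖ + ‖ξ k‖) * ‖lam a⁻¹ (ξ k) - ξ k‖ :=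
        lp.tsum_abs_norm_sq_sub_norm_sq_le _ _
    _ = 2 * ‖lam a⁻¹ (ξ k) - ξ k‖ := by rw [hlam.norm_apply, hξ]; ring

theorem exists_norm_eq_one_norm_sub_sq_le (hlam : IsLeftRegularRep lam) {q : G → ℝ}
    (hq0 : ∀ x, 0 ≤ q x) (hq : Summable q) (hq1 : ∑' x, q x = 1) :
    ∃ ξ : ℓ²(G, ℂ), ‖ξ‖ = 1 ∧ ∀ a, ‖lam a ξ - ξ‖ ^ 2 ≤ ∑' x, |q (a⁻¹ * x) - q x| := by
  have hsq : ∀ x, ‖((√(q x) : ℝ) : ℂ)‖ ^ 2 = q x := fun x => by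
    rw [Complex.norm_real, Real.norm_eq_abs, sq_abs, Real.sq_sqrt (hq0 x)]
  let ξ : ℓ²(G, ℂ) := ⟨fun x => (√(q x) : ℂ), memℓp_two_iff.mpr (by simpa only [hsq] using hq)⟩
  have hξ : ‖ξ‖ = 1 := by
    have h := (lp.hasSum_norm_sq ξ).tsum_eq
    simp only [ξ, hsq, hq1] at h
    exact (pow_eq_one_iff_of_nonneg (norm_nonneg ξ) two_ne_zero).mp h.symm
  refine ⟨ξ, hξ, fun a => ?_⟩
  have hqa : Summable fun x => q (a⁻¹ * x) := (Equiv.mulLeft a⁻¹).summable_iff.mpr hq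
  rw [← (lp.hasSum_norm_sq _).tsum_eq]
  refine (lp.hasSum_norm_sq _).summable.tsum_le_tsum (fun x => ?_) (hqa.sub hq).abs
  simp only [lp.coeFn_sub, Pi.sub_apply, hlam.apply_apply, ξ]
  rw [← Complex.ofReal_sub, Complex.norm_real, Real.norm_eq_abs, sq_abs]
  exact Real.sq_sqrt_sub_sqrt_le_abs_sub (hq0 _) (hq0 _)

end IsLeftRegularRep

end LeftRegular

open boundedFuns in
theorem IsAmenable.exists_le_sum_sub {G ι : Type*} [Group G] [Fintype ι] (hG : IsAmenable G)
    (s : ι → G) {F : ι → G → ℝ} {C : ℝ} (hF : ∀ i x, |F i x| ≤ C) {u : ℝ} (hu : u < 0) :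
    ∃ y, u ≤ ∑ i, (F i (s i * y) - F i y) := by
  obtain ⟨m, hm1, hmpos, hminv⟩ := hG
  have hm1' : m one = 1 := hm1
  have hminv' : ∀ g f, m (leftTranslate g f) = m f := hminv
  by_contra! hlt
  let Fb : ι → boundedFuns G := fun i => ⟨fun x => (F i x : ℂ), C, fun x => by simpa using hF i x⟩
  let h : boundedFuns G := (u : ℂ) • one - ∑ i, (leftTranslate (s i)⁻¹ (Fb i) - Fb i)
  have hmh : m h = u := by
    simp [h, hminv', hm1']
  have hval : ∀ y, (h : G → ℂ) y = ((u - ∑ i, (F i (s i * y) - F i y) : ℝ) : ℂ) := fun y => by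
    simp [h, Fb, one, leftTranslate, Finset.sum_apply]
  obtain ⟨r, hr, hmr⟩ := hmpos h fun y => ⟨_, sub_nonneg.mpr (hlt y).le, hval y⟩
  rw [hmh] at hmr
  linarith [Complex.ofReal_injective hmr]

theorem exists_dual_lt_neg_of_forall_le_norm {X : Type*} [NormedAddCommGroup X]
    [NormedSpace ℝ X] {C : Set X} (hC : Convex ℝ C) {δ : ℝ} (hδ : 0 < δ)
    (h : ∀ z ∈ C, δ ≤ ‖z‖) : ∃ (f : StrongDual ℝ X) (u : ℝ), u < 0 ∧ ∀ z ∈ C, f z < u := by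
  have h0 : (0 : X) ∉ closure C := fun h0 => by
    have : δ ≤ ‖(0 : X)‖ := closure_minimal h (isClosed_le continuous_const continuous_norm) h0
    rw [norm_zero] at this
    linarith
  obtain ⟨f, u, hfu, hu⟩ := geometric_hahn_banach_closed_point hC.closure isClosed_closure h0
  exact ⟨f, u, by simpa using hu, fun z hz => hfu z (subset_closure hz)⟩

noncomputable def Finsupp.toL1 (G : Type*) : (G →₀ ℝ) →ₗ[ℝ] ℓ¹(G, ℝ) where
  toFun q := ⟨⇑q, (memℓp_zero q.hasFiniteSupport).of_exponent_ge zero_le_one⟩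
  map_add' _ _ := rfl
  map_smul' _ _ := rfl

@[simp]
theorem Finsupp.toL1_apply {G : Type*} (q : G →₀ ℝ) (x : G) : toL1 G q x = q x :=
  rfl

def Finsupp.stdSimplex (G : Type*) : Set (G →₀ ℝ) := {q | (∀ x, 0 ≤ q x) ∧ ∑' x, q x = 1}

theorem Finsupp.convex_stdSimplex (G : Type*) : Convex ℝ (stdSimplex G) := by
  rintro q₁ ⟨hq₁, hq₁'⟩ q₂ ⟨hq₂, hq₂'⟩ a b ha hb hab
  refine ⟨fun x => add_nonneg (mul_nonneg ha (hq₁ x)) (mul_nonneg hb (hq₂ x)), ?_⟩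
  simp only [coe_add, coe_smul, Pi.add_apply, Pi.smul_apply, smul_eq_mul]
  rw [((summable_of_hasFiniteSupport q₁.hasFiniteSupport).mul_left a).tsum_add
    ((summable_of_hasFiniteSupport q₂.hasFiniteSupport).mul_left b), tsum_mul_left,
    tsum_mul_left, hq₁', hq₂', mul_one, mul_one, hab]

theorem Finsupp.single_one_mem_stdSimplex {G : Type*} (y : G) : single y 1 ∈ stdSimplex G := by
  classical
  refine ⟨fun x => ?_, by simp [single_apply]⟩
  rw [single_apply]
  split_ifs <;> norm_num

section TranslateSub

variable {G ι : Type*} [Group G]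

noncomputable def translateSubL1 (s : ι → G) : (G →₀ ℝ) →ₗ[ℝ] (ι → ℓ¹(G, ℝ)) :=
  LinearMap.pi fun i =>
    Finsupp.toL1 G ∘ₗ ((Finsupp.domLCongr (Equiv.mulLeft (s i))).toLinearMap - LinearMap.id)

theorem translateSubL1_apply (s : ι → G) (q : G →₀ ℝ) (i : ι) (x : G) :
    translateSubL1 s q i x = q ((s i)⁻¹ * x) - q x := by
  simp [translateSubL1]

theorem translateSubL1_single [DecidableEq G] (s : ι → G) (y : G) (i : ι) :
    translateSubL1 s (Finsupp.single y 1) i = lp.single 1 (s i * y) 1 - lp.single 1 y 1 := by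
  refine lp.ext (funext fun x => ?_)
  simp [translateSubL1_apply, Finsupp.single_apply, lp.single_apply, Pi.single_apply,
    eq_inv_mul_iff_mul_eq, @eq_comm _ x]

end TranslateSub

theorem IsAmenable.exists_tsum_abs_sub_lt {G ι : Type*} [Group G] [Fintype ι]
    (hG : IsAmenable G) (s : ι → G) {δ : ℝ} (hδ : 0 < δ) :
    ∃ q : G → ℝ, (∀ x, 0 ≤ q x) ∧ Summable q ∧ ∑' x, q x = 1 ∧
      ∀ i, ∑' x, |q ((s i)⁻¹ * x) - q x| < δ := by
  classical
  by_contra! h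
  have hnorm : ∀ z ∈ translateSubL1 s '' Finsupp.stdSimplex G, δ ≤ ‖z‖ := by
    rintro _ ⟨q, ⟨hq0, hq1⟩, rfl⟩
    obtain ⟨i, hi⟩ := h q hq0 (summable_of_hasFiniteSupport q.hasFiniteSupport) hq1
    calc δ ≤ ∑' x, |q ((s i)⁻¹ * x) - q x| := hi
      _ = ‖translateSubL1 s q i‖ := by
          simp only [lp.norm_eq_tsum_norm, translateSubL1_apply, Real.norm_eq_abs]
      _ ≤ ‖translateSubL1 s q‖ := norm_le_pi_norm _ i
  obtain ⟨f, u, hu, hf⟩ := exists_dual_lt_neg_of_forall_le_norm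
    ((Finsupp.convex_stdSimplex G).linear_image _) hδ hnorm
  let F : ι → G → ℝ := fun i x => f (Pi.single i (lp.single 1 x 1))
  have hF : ∀ i x, |F i x| ≤ ‖f‖ := fun i x => by
    calc |F i x| ≤ ‖f‖ * ‖(Pi.single i (lp.single 1 x 1) : ι → ℓ¹(G, ℝ))‖ := f.le_opNorm _
      _ = ‖f‖ := by rw [Pi.norm_single, lp.norm_single (by norm_num), norm_one, mul_one]
  obtain ⟨y, hy⟩ := hG.exists_le_sum_sub s hF hu
  have hfy : f (translateSubL1 s (Finsupp.single y 1)) = ∑ i, (F i (s i * y) - F i y) := by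
    rw [← Finset.univ_sum_single (translateSubL1 s _), map_sum]
    simp [F, translateSubL1_single, Pi.single_sub]
  exact (hf _ ⟨_, Finsupp.single_one_mem_stdSimplex y, rfl⟩).not_ge (hfy ▸ hy)

theorem IsLeftRegularRep.not_isUnit_one_sub_markovOp {G ι : Type*} [Group G] [Fintype ι]
    [Nonempty ι] {lam : G → (ℓ²(G, ℂ) →L[ℂ] ℓ²(G, ℂ))} (hlam : IsLeftRegularRep lam)
    (hG : IsAmenable G) (s : ι → G) : ¬ IsUnit (1 - markovOp fun i => lam (s i)) := by
  rintro ⟨T, hT⟩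
  obtain ⟨K, hK⟩ : ∃ K : ℝ≥0, ∀ ξ, ‖ξ‖ ≤ K * ‖(T : ℓ²(G, ℂ) →L[ℂ] ℓ²(G, ℂ)) ξ‖ :=
    ⟨_, (ContinuousLinearEquiv.unitsEquiv ℂ _ T).antilipschitz.le_mul_norm (map_zero _)⟩
  set r : ℝ := (K + 1)⁻¹
  have hr : 0 < r := by positivity
  obtain ⟨q, hq0, hq, hq1, hqs⟩ := hG.exists_tsum_abs_sub_lt s (pow_pos hr 2)
  obtain ⟨ξ, hξ, hξs⟩ := hlam.exists_norm_eq_one_norm_sub_sq_le hq0 hq hq1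
  have hsmall : ∀ i, ‖lam (s i) ξ - ξ‖ ≤ r := fun i =>
    (pow_le_pow_iff_left₀ (norm_nonneg _) hr.le two_ne_zero).mp ((hξs (s i)).trans (hqs i).le)
  have h1 : 1 ≤ K * r := by
    simpa [hξ] using (hK ξ).trans (mul_le_mul_of_nonneg_left
      (hT ▸ norm_one_sub_markovOp_apply_le _ hsmall) K.2)
  have h2 : K * r < 1 := by
    rw [mul_inv_lt_iff₀ (by positivity)]
    linarith
  linarith

/-- Kesten's criterion: a finitely generated group `G = ⟨g₁, ..., gₙ⟩` is amenable iff `1` lies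
in the spectrum of the Markov operator `M_λ = (1/n)(λ(g₁) + ⋯ + λ(gₙ))` of its left regular
representation `λ` on `ℓ²(G)`, i.e. iff `I − M_λ` is not invertible. -/
theorem stmt11 {G : Type*} [Group G] (n : ℕ) (hn : 0 < n) (g : Fin n → G)
    (hgen : Subgroup.closure (Set.range g) = ⊤)
    (lam : G → (lp (fun _ : G => ℂ) 2 →L[ℂ] lp (fun _ : G => ℂ) 2))
    (hlam : ∀ (x : G) (f : lp (fun _ : G => ℂ) 2) (y : G),
      (lam x f : ∀ _ : G, ℂ) y = f (x⁻¹ * y)) :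
    IsAmenable G ↔
      ¬ IsUnit ((1 : lp (fun _ : G => ℂ) 2 →L[ℂ] lp (fun _ : G => ℂ) 2)
        - ((n : ℂ)⁻¹) • ∑ i : Fin n, lam (g i)) := by
  have hlam : IsLeftRegularRep lam := hlam
  have : Nonempty (Fin n) := ⟨⟨0, hn⟩⟩
  have hM : ((n : ℂ)⁻¹) • ∑ i : Fin n, lam (g i) = markovOp fun i => lam (g i) := by
    simp [markovOp]
  rw [hM]
  refine ⟨fun hG => hlam.not_isUnit_one_sub_markovOp hG g, fun hT => ?_⟩
  obtain ⟨ξ, hξ, hTξ⟩ := ContinuousLinearMap.exists_tendsto_inner_of_not_isUnit hT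
  have hg : Set.range g ⊆ almostInvariantSubgroup hlam.toMonoidHom atTop ξ :=
    Set.range_subset_iff.mpr <| tendsto_norm_sub_of_tendsto_inner_one_sub_markovOp
      (fun _ x => (hlam.norm_apply _ x).le) hTξ
  have hall : almostInvariantSubgroup hlam.toMonoidHom atTop ξ = ⊤ :=
    top_le_iff.mp (hgen ▸ (Subgroup.closure_le _).mpr hg)
  exact hlam.isAmenable_of_tendsto ξ hξ fun a => hall ▸ Subgroup.mem_top a
end
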